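/- Let G be a weak framework for a matroid M and let C be a circuit of M. Then either (a) G[C] is a balanced cycle, or (b) G[C] is a connected graph of minimum degree at least two with |C| = |V(G[C])| + 1 containing no balanced cycle, or (c) G[C] is a vertex-disjoint union of non-balanced cycles. -/

import Mathlib

open Set Matroid
open scoped Classical

namespace QuasiGraphicPaper

universe u v

/-- A finite multigraph: a set `V` of vertices (in an ambient type `α`), a set `E` of
edges (in an ambient type `β`), and an incidence function assigning to each edge an
unordered pair of endpoints; loop-edges and parallel edges are allowed. -/
structure Graph (α : Type u) (β : Type v) where
  V : Set α
  E : Set β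
  ends : β → Sym2 α
  finV : V.Finite
  finE : E.Finite
  ends_mem : ∀ ⦃e⦄, e ∈ E → ∀ ⦃x⦄, x ∈ ends e → x ∈ V

namespace Graph

variable {α : Type u} {β : Type v}

/-- `e` is a loop-edge of `G` at the vertex `v`. -/
def IsLoopAt (G : Graph α β) (e : β) (v : α) : Prop :=
  e ∈ G.E ∧ G.ends e = Sym2.diag v

/-- `loops_G(v)`: the set of loop-edges of `G` at `v`. -/
def loopsAt (G : Graph α β) (v : α) : Set β := {e | G.IsLoopAt e v}

/-- Two vertices are adjacent if some edge of `G` has them as its two endpoints. -/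
def Adj (G : Graph α β) (u v : α) : Prop := ∃ e ∈ G.E, G.ends e = s(u, v)

/-- A graph is connected if any two of its vertices are joined by a walk.
(The graph with no vertices is connected.) -/
def Connected (G : Graph α β) : Prop :=
  ∀ u ∈ G.V, ∀ v ∈ G.V, Relation.ReflTransGen G.Adj u v

/-- Delete a set `X` of vertices: remove the vertices in `X` and all edges meeting `X`. -/
def deleteVertices (G : Graph α β) (X : Set α) : Graph α β where
  V := G.V \ X
  E := {e ∈ G.E | ∀ x ∈ G.ends e, x ∉ X}
  ends := G.ends
  finV := G.finV.subset diff_subset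
  finE := G.finE.subset (sep_subset _ _)
  ends_mem := fun e he x hx => ⟨G.ends_mem he.1 hx, he.2 x hx⟩

/-- `G − v`: delete the single vertex `v`. -/
abbrev deleteVertex (G : Graph α β) (v : α) : Graph α β := G.deleteVertices {v}

/-- `G − e`: delete the edge `e` (keeping all vertices). -/
def deleteEdge (G : Graph α β) (e : β) : Graph α β where
  V := G.V
  E := G.E \ {e}
  ends := G.ends
  finV := G.finV
  finE := G.finE.subset diff_subset
  ends_mem := fun f hf x hx => G.ends_mem hf.1 hx

/-- `G[X]`: the subgraph of `G` with edge set `X` (intersected with `E(G)`) and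
no isolated vertices. -/
def restrictEdges (G : Graph α β) (X : Set β) : Graph α β where
  V := {v | ∃ e ∈ X ∩ G.E, v ∈ G.ends e}
  E := X ∩ G.E
  ends := G.ends
  finV := G.finV.subset (by rintro v ⟨e, ⟨-, he⟩, hv⟩; exact G.ends_mem he hv)
  finE := G.finE.subset inter_subset_right
  ends_mem := fun e he x hx => ⟨e, he, hx⟩

/-- The connected component of `G` containing the vertex `v`, as a graph. -/
def componentOf (G : Graph α β) (v : α) : Graph α β where
  V := {u ∈ G.V | Relation.ReflTransGen G.Adj v u}
  E := {e ∈ G.E | ∀ x ∈ G.ends e, Relation.ReflTransGen G.Adj v x}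
  ends := G.ends
  finV := G.finV.subset (sep_subset _ _)
  finE := G.finE.subset (sep_subset _ _)
  ends_mem := fun e he x hx => ⟨G.ends_mem he.1 hx, he.2 x hx⟩

/-- `H` is a connected component of `G`. -/
def IsComponentOf (H G : Graph α β) : Prop := ∃ v ∈ G.V, H = G.componentOf v

/-- The number of connected components of `G`. -/
noncomputable def ncomponents (G : Graph α β) : ℕ :=
  {H : Graph α β | H.IsComponentOf G}.ncard

/-- `G` has at most two connected components: among any three vertices, two are joined. -/
def AtMostTwoComponents (G : Graph α β) : Prop :=
  ∀ u ∈ G.V, ∀ v ∈ G.V, ∀ w ∈ G.V,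
    Relation.ReflTransGen G.Adj u v ∨ Relation.ReflTransGen G.Adj u w ∨
      Relation.ReflTransGen G.Adj v w

/-- The degree of a vertex: loop-edges count twice. -/
noncomputable def degree (G : Graph α β) (v : α) : ℕ :=
  ({e ∈ G.E | v ∈ G.ends e ∧ ¬ (G.ends e).IsDiag}).ncard +
    2 * ({e ∈ G.E | G.ends e = Sym2.diag v}).ncard

/-- `G` is a cycle: it is connected, has at least one edge, and every vertex has
degree two. -/
def IsCycleGraph (G : Graph α β) : Prop :=
  G.E.Nonempty ∧ G.Connected ∧ ∀ v ∈ G.V, G.degree v = 2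

/-- `C` is (the edge set of) a cycle of `G`. -/
def CycleSet (G : Graph α β) (C : Set β) : Prop :=
  C ⊆ G.E ∧ (G.restrictEdges C).IsCycleGraph

/-- A forest: a graph with no cycles (in particular no loop-edges). -/
def IsForest (G : Graph α β) : Prop := ∀ C, ¬ G.CycleSet C

/-- `H` is a subgraph of `G`. -/
def IsSubgraph (H G : Graph α β) : Prop := H.V ⊆ G.V ∧ H.E ⊆ G.E ∧ H.ends = G.ends

/-- `G` is `k`-connected if `G − X` is connected for every vertex set `X` with `|X| < k`. -/
def KConnected (G : Graph α β) (k : ℕ) : Prop :=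
  ∀ X : Set α, X.encard < k → (G.deleteVertices X).Connected

/-- A theta: a `2`-connected graph with exactly two vertices of degree three, all
other vertices having degree two. -/
def IsTheta (H : Graph α β) : Prop :=
  H.KConnected 2 ∧
    ∃ a ∈ H.V, ∃ b ∈ H.V, a ≠ b ∧ H.degree a = 3 ∧ H.degree b = 3 ∧
      ∀ v ∈ H.V, v ≠ a → v ≠ b → H.degree v = 2

/-- `G / e`: contract the non-loop edge `e` with endpoints `x` and `y`
(identifying `y` with `x` and deleting `e`). -/
noncomputable def contractEdge (G : Graph α β) (e : β) (x y : α) (he : e ∈ G.E)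
    (hxy : G.ends e = s(x, y)) (hne : x ≠ y) : Graph α β where
  V := G.V \ {y}
  E := G.E \ {e}
  ends := fun f => (G.ends f).map (fun w => if w = y then x else w)
  finV := G.finV.subset diff_subset
  finE := G.finE.subset diff_subset
  ends_mem := by
    rintro f ⟨hf, -⟩ z hz
    rw [Sym2.mem_map] at hz
    obtain ⟨w, hw, rfl⟩ := hz
    by_cases hwy : w = y
    · rw [if_pos hwy]
      have hx : x ∈ G.ends e := by rw [hxy]; exact Sym2.mem_mk_left x y
      exact ⟨G.ends_mem he hx, by simp [hne]⟩
    · rw [if_neg hwy]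
      exact ⟨G.ends_mem hf hw, by simp [hwy]⟩

/-- `G ∘ e`: for a loop-edge `e` at a vertex `v` which is the unique loop-edge at `v`,
delete `v` and `e`, and replace every other edge `f = vw` at `v` by a loop-edge at `w`. -/
noncomputable def circ (G : Graph α β) (e : β) (v : α)
    (hno : ∀ f ∈ G.E, G.ends f = Sym2.diag v → f = e) : Graph α β where
  V := G.V \ {v}
  E := G.E \ {e}
  ends := fun f =>
    if h : f ∈ G.E ∧ f ≠ e ∧ v ∈ G.ends f then Sym2.diag (Sym2.Mem.other h.2.2)
    else G.ends f
  finV := G.finV.subset diff_subset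
  finE := G.finE.subset diff_subset
  ends_mem := by
    rintro f ⟨hf, hfe⟩ z hz
    have hfe' : f ≠ e := fun h' => hfe (by simp [h'])
    by_cases h : f ∈ G.E ∧ f ≠ e ∧ v ∈ G.ends f
    · rw [dif_pos h] at hz
      have hze : z = Sym2.Mem.other h.2.2 := by
        have h2 : z ∈ s(Sym2.Mem.other h.2.2, Sym2.Mem.other h.2.2) := hz
        rw [Sym2.mem_iff] at h2
        tauto
      subst hze
      refine ⟨G.ends_mem hf (Sym2.other_mem h.2.2), ?_⟩
      simp only [mem_singleton_iff]
      intro hzv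
      apply h.2.1
      apply hno f hf
      show G.ends f = s(v, v)
      rw [← Sym2.other_spec h.2.2, hzv]
    · rw [dif_neg h] at hz
      refine ⟨G.ends_mem hf hz, ?_⟩
      simp only [mem_singleton_iff]
      intro hzv
      subst hzv
      exact h ⟨hf, hfe', hz⟩

end Graph

/-! ### Matroid notions -/

variable {α : Type u} {β : Type v}

/-- The rank `r_M(X)` of a set `X` in a matroid `M`: the maximum size of an
independent subset of `X`. -/
noncomputable def rank (M : Matroid β) (X : Set β) : ℕ :=
  (⨆ I ∈ {I : Set β | M.Indep I ∧ I ⊆ X}, I.encard).toNat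

/-- `C` is a circuit of `M` : a minimal dependent set. -/
def IsCircuit (M : Matroid β) (C : Set β) : Prop :=
  M.Dep C ∧ ∀ D, D ⊂ C → M.Indep D

/-- `M \ D` : delete the set `D` from the matroid `M`. -/
def deleteM (M : Matroid β) (D : Set β) : Matroid β := M ↾ (M.E \ D)

/-- `M / C` : contract the set `C` in the matroid `M`. -/
def contractM (M : Matroid β) (C : Set β) : Matroid β := (M✶ ↾ (M✶.E \ C))✶

/-- `G` is a weak framework for `M`: conditions (1)–(3). -/
def WeakFramework (G : Graph α β) (M : Matroid β) : Prop :=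
  G.E = M.E ∧
  (∀ H : Graph α β, H.IsComponentOf G → rank M H.E ≤ H.V.ncard) ∧
  (∀ v ∈ G.V,
    M.closure (G.deleteVertex v).E ⊆ (G.deleteVertex v).E ∪ G.loopsAt v)

/-- `G` is a framework for `M`: conditions (1)–(4). -/
def Framework (G : Graph α β) (M : Matroid β) : Prop :=
  WeakFramework G M ∧
    ∀ C, IsCircuit M C → (G.restrictEdges C).AtMostTwoComponents

/-- `M` is the cycle matroid `M(G)` of `G` : the ground set of `M` is `E(G)`, and the
circuits of `M` are exactly the edge sets of cycles of `G`. -/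
def IsCycleMatroidOf (G : Graph α β) (M : Matroid β) : Prop :=
  M.E = G.E ∧ ∀ C, IsCircuit M C ↔ G.CycleSet C

/-- A matroid is graphic if it is the cycle matroid of some graph. -/
def Graphic (M : Matroid β) : Prop :=
  ∃ (γ : Type v) (G : Graph γ β), IsCycleMatroidOf G M

/-- A matroid is quasi-graphic if it has a framework. -/
def QuasiGraphic (M : Matroid β) : Prop :=
  ∃ (γ : Type v) (G : Graph γ β), Framework G M

/-- `M` is a lift of `N` if some single-element extension `M'` of `M` satisfies
`M' \ e = M` and `M' / e = N`. -/
def IsLiftOf (M N : Matroid β) : Prop :=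
  ∃ M' : Matroid (Option β), (none : Option β) ∈ M'.E ∧
    deleteM M' {none} = M.map some (Option.some_injective β).injOn ∧
    contractM M' {none} = N.map some (Option.some_injective β).injOn

/-- `M` is a lifted-graphic matroid: for some single-element extension `M'` of `M`,
`M' / e` is graphic. -/
def LiftedGraphic (M : Matroid β) : Prop :=
  ∃ M' : Matroid (Option β), (none : Option β) ∈ M'.E ∧
    deleteM M' {none} = M.map some (Option.some_injective β).injOn ∧
    Graphic (contractM M' {none})

/-- `(M, V)` is a framed matroid: `V` is a basis of `M` and every element of `M` is
spanned by a subset of `V` with at most two elements. -/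
def FramedMatroid {γ : Type u} (M : Matroid γ) (V : Set γ) : Prop :=
  M.IsBase V ∧ ∀ e ∈ M.E, ∃ S ⊆ V, S.ncard ≤ 2 ∧ e ∈ M.closure S

/-- `M` is a frame matroid: `M = M' \ V` for some framed matroid `(M', V)`. -/
def FrameMatroid (M : Matroid β) : Prop :=
  ∃ (γ : Type v) (M' : Matroid (β ⊕ γ)) (V : Set (β ⊕ γ)),
    FramedMatroid M' V ∧
      deleteM M' V = M.map Sum.inl Sum.inl_injective.injOn

/-- `M` is `3`-connected: it has no `k`-separation for `k ≤ 2`. -/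
def ThreeConnected (M : Matroid β) : Prop :=
  ∀ X ⊆ M.E, ∀ k : ℕ, k ≤ 2 → (k : ℕ∞) ≤ X.encard → (k : ℕ∞) ≤ (M.E \ X).encard →
    rank M M.E + k ≤ rank M X + rank M (M.E \ X)

/-- `M` is representable over some field. -/
def Representable (M : Matroid β) : Prop :=
  ∃ (F : Type v) (_ : Field F) (W : Type v) (_ : AddCommGroup W) (_ : Module F W)
    (φ : β → W), ∀ I ⊆ M.E, (M.Indep I ↔ LinearIndependent F (fun x : I => φ x))

/-- A collection `B` of cycles of `G` satisfies the theta-property if there is no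
theta-subgraph of `G` with exactly two of its three cycles in `B`. -/
def ThetaProperty (G : Graph α β) (B : Set (Set β)) : Prop :=
  ∀ H : Graph α β, H.IsSubgraph G → H.IsTheta →
    ∀ C1 C2 C3, H.CycleSet C1 → H.CycleSet C2 → H.CycleSet C3 →
      C1 ≠ C2 → C2 ≠ C3 → C1 ≠ C3 → C1 ∈ B → C2 ∈ B → C3 ∈ B

/-! A non-loop edge at a vertex `v` is never spanned by edges avoiding `v` (condition (3)). Hence
every vertex of `G[C]` has degree at least two, for otherwise its unique non-loop edge would be
spanned by the rest of `C`; so `|V(G[C])| ≤ |C|`. Conversely, an independent set with all ends in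
a connected vertex set `S` has at most `|S|` elements: add edges leaving `S` one at a time until
`S` is a whole component, then apply condition (2).

If `G[C]` is connected, this gives `|C| - 1 ≤ |V(G[C])| ≤ |C|`. When `|C| = |V(G[C])|` all
degrees are two and `G[C]` is a balanced cycle; otherwise a balanced cycle of `G[C]` would be a
circuit inside `C`, hence `C` itself, contradicting the count. If `G[C]` is disconnected, each
component has an independent edge set, so it has as many edges as vertices, hence is a cycle,
and it is not balanced. -/

theorem _root_.Relation.ReflTransGen.exists_rel_of_mem_of_notMem {γ : Type*}
    {r : γ → γ → Prop} {S : Set γ} {a b : γ} (h : Relation.ReflTransGen r a b) (ha : a ∈ S)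
    (hb : b ∉ S) : ∃ y ∈ S, ∃ x ∉ S, Relation.ReflTransGen r a x ∧ r y x := by
  induction h with
  | refl => exact absurd ha hb
  | @tail c d hac hcd ih =>
    by_cases hc : c ∈ S
    · exact ⟨c, hc, d, hb, hac.tail hcd, hcd⟩
    · exact ih hc

theorem _root_.Sym2.eq_diag_iff_mem_and_isDiag {γ : Type*} {z : Sym2 γ} {v : γ} :
    z = Sym2.diag v ↔ v ∈ z ∧ z.IsDiag := by
  induction z using Sym2.ind with
  | _ a b => rw [Sym2.mk_isDiag_iff, Sym2.diag, Sym2.eq_iff, Sym2.mem_iff]; grind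

theorem isCircuit_iff {M : Matroid β} {C : Set β} : IsCircuit M C ↔ M.IsCircuit C := by
  rw [Matroid.isCircuit_iff_forall_ssubset]
  exact and_congr_right fun _ => ⟨fun h _ hI => h _ hI, fun h _ hI => h hI⟩

theorem ncard_le_rank {M : Matroid β} {J X : Set β} (hJ : M.Indep J) (hJX : J ⊆ X)
    (hX : X.Finite) : J.ncard ≤ rank M X := by
  have hle : J.encard ≤ ⨆ I ∈ {I : Set β | M.Indep I ∧ I ⊆ X}, I.encard :=
    le_iSup₂ (f := fun I (_ : I ∈ {I : Set β | M.Indep I ∧ I ⊆ X}) => I.encard) J ⟨hJ, hJX⟩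
  have hfin : (⨆ I ∈ {I : Set β | M.Indep I ∧ I ⊆ X}, I.encard) ≠ ⊤ :=
    ((iSup₂_le fun I hI => encard_mono hI.2).trans_lt hX.encard_lt_top).ne
  exact ENat.toNat_le_toNat hle hfin

namespace Graph

instance (Γ : Graph α β) : Std.Symm Γ.Adj :=
  ⟨fun _ _ ⟨e, he, hends⟩ => ⟨e, he, hends.trans Sym2.eq_swap⟩⟩

def edgesWithin (G : Graph α β) (S : Set α) : Set β := {e ∈ G.E | ∀ x ∈ G.ends e, x ∈ S}

theorem degree_eq_sum (Γ : Graph α β) (v : α) :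
    Γ.degree v = ∑ e ∈ Γ.finE.toFinset with v ∈ Γ.ends e,
      if (Γ.ends e).IsDiag then 2 else 1 := by
  rw [Finset.sum_ite, Finset.sum_const, Finset.sum_const, smul_eq_mul, smul_eq_mul, mul_one,
    add_comm, mul_comm, Finset.filter_filter, Finset.filter_filter, degree]
  congr 2 <;> rw [← ncard_coe_finset] <;> congr 1 <;> ext e <;>
    simp [Sym2.eq_diag_iff_mem_and_isDiag, and_assoc]

theorem sum_degree_eq_two_mul_ncard_E (Γ : Graph α β) :
    ∑ v ∈ Γ.finV.toFinset, Γ.degree v = 2 * Γ.E.ncard := by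
  have hends : ∀ e ∈ Γ.E, {v ∈ Γ.finV.toFinset | v ∈ Γ.ends e} = (Γ.ends e).toFinset := by
    intro e he
    ext v
    simpa [Sym2.mem_toFinset] using fun hv => Γ.ends_mem he hv
  simp_rw [degree_eq_sum]
  rw [Finset.sum_comm' (t' := Γ.finE.toFinset)
    (s' := fun e => {v ∈ Γ.finV.toFinset | v ∈ Γ.ends e}) (by simp; tauto)]
  calc _ = ∑ e ∈ Γ.finE.toFinset, 2 := Finset.sum_congr rfl fun e he => by
          rw [Finset.sum_const, hends e (by simpa using he), Sym2.card_toFinset]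
          split_ifs <;> rfl
    _ = 2 * Γ.E.ncard := by
      rw [Finset.sum_const, smul_eq_mul, mul_comm, ncard_eq_toFinset_card _ Γ.finE]

theorem ncard_V_le_ncard_E (Γ : Graph α β) (h : ∀ v ∈ Γ.V, 2 ≤ Γ.degree v) :
    Γ.V.ncard ≤ Γ.E.ncard := by
  have := Finset.sum_le_sum fun v hv => h v (Γ.finV.mem_toFinset.mp hv)
  rw [sum_degree_eq_two_mul_ncard_E, Finset.sum_const, smul_eq_mul,
    ← ncard_eq_toFinset_card _ Γ.finV] at this
  omega

theorem isCycleGraph_of_ncard_E_le (Γ : Graph α β) (hne : Γ.E.Nonempty) (hconn : Γ.Connected)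
    (h : ∀ v ∈ Γ.V, 2 ≤ Γ.degree v) (hle : Γ.E.ncard ≤ Γ.V.ncard) : Γ.IsCycleGraph := by
  refine ⟨hne, hconn, fun v hv => (h v hv).antisymm' ?_⟩
  by_contra! hlt
  have := Finset.sum_lt_sum (fun v hv => h v (Γ.finV.mem_toFinset.mp hv))
    ⟨v, Γ.finV.mem_toFinset.mpr hv, hlt⟩
  rw [sum_degree_eq_two_mul_ncard_E, Finset.sum_const, smul_eq_mul,
    ← ncard_eq_toFinset_card _ Γ.finV] at this
  omega

theorem IsCycleGraph.ncard_V_eq_ncard_E {Γ : Graph α β} (h : Γ.IsCycleGraph) :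
    Γ.V.ncard = Γ.E.ncard := by
  have := Finset.sum_congr rfl fun v hv => h.2.2 v (Γ.finV.mem_toFinset.mp hv)
  rw [sum_degree_eq_two_mul_ncard_E, Finset.sum_const, smul_eq_mul,
    ← ncard_eq_toFinset_card _ Γ.finV] at this
  omega

theorem IsSubgraph.trans {H K G : Graph α β} (hHK : H.IsSubgraph K) (hKG : K.IsSubgraph G) :
    H.IsSubgraph G :=
  ⟨hHK.1.trans hKG.1, hHK.2.1.trans hKG.2.1, hHK.2.2.trans hKG.2.2⟩

theorem restrictEdges_isSubgraph (G : Graph α β) (X : Set β) : (G.restrictEdges X).IsSubgraph G :=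
  ⟨fun _ ⟨_, he, hv⟩ => G.ends_mem he.2 hv, inter_subset_right, rfl⟩

theorem componentOf_isSubgraph (G : Graph α β) (v : α) : (G.componentOf v).IsSubgraph G :=
  ⟨sep_subset _ _, sep_subset _ _, rfl⟩

theorem IsSubgraph.adj {H G : Graph α β} (h : H.IsSubgraph G) {u v : α} (huv : H.Adj u v) :
    G.Adj u v :=
  let ⟨e, he, hends⟩ := huv
  ⟨e, h.2.1 he, h.2.2 ▸ hends⟩

theorem IsSubgraph.V_subset_componentOf {H G : Graph α β} (h : H.IsSubgraph G)
    (hH : H.Connected) {w : α} (hw : w ∈ H.V) : H.V ⊆ (G.componentOf w).V :=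
  fun u hu => ⟨h.1 hu, Relation.ReflTransGen.mono (fun _ _ => h.adj) _ _ (hH w hw u hu)⟩

theorem IsSubgraph.E_subset_edgesWithin {H G : Graph α β} (h : H.IsSubgraph G) :
    H.E ⊆ G.edgesWithin H.V :=
  fun _ he => ⟨h.2.1 he, fun _ hx => H.ends_mem he (h.2.2 ▸ hx)⟩

theorem restrictEdges_restrictEdges_self (G : Graph α β) (X : Set β) :
    (G.restrictEdges X).restrictEdges X = G.restrictEdges X := by
  simp only [restrictEdges, inter_self, ← inter_assoc]

theorem mem_componentOf_E {Γ : Graph α β} {v u : α} {e : β} (he : e ∈ Γ.E)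
    (hu : u ∈ Γ.ends e) (hvu : Relation.ReflTransGen Γ.Adj v u) : e ∈ (Γ.componentOf v).E := by
  refine ⟨he, fun x hx => ?_⟩
  obtain rfl | hxu := eq_or_ne x u
  · exact hvu
  · exact hvu.tail ⟨e, he, ((Sym2.mem_and_mem_iff hxu.symm).mp ⟨hu, hx⟩)⟩

theorem degree_componentOf {Γ : Graph α β} {v u : α} (hu : u ∈ (Γ.componentOf v).V) :
    (Γ.componentOf v).degree u = Γ.degree u := by
  have hE : ∀ e ∈ Γ.E, u ∈ Γ.ends e → e ∈ (Γ.componentOf v).E :=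
    fun e he hue => mem_componentOf_E he hue hu.2
  unfold Graph.degree
  congr 3 <;> ext e
  · exact ⟨fun ⟨he, h⟩ => ⟨he.1, h⟩, fun ⟨he, h⟩ => ⟨hE e he h.1, h⟩⟩
  · refine ⟨fun ⟨he, h⟩ => ⟨he.1, h⟩, fun ⟨he, h⟩ => ⟨hE e he ?_, h⟩⟩
    exact Sym2.eq_diag_iff_mem_and_isDiag.mp h |>.1

theorem reflTransGen_componentOf {Γ : Graph α β} {v u : α}
    (hvu : Relation.ReflTransGen Γ.Adj v u) : Relation.ReflTransGen (Γ.componentOf v).Adj v u := by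
  induction hvu with
  | refl => exact .refl
  | @tail b c hvb hbc ih =>
    obtain ⟨e, he, hends⟩ := hbc
    exact ih.tail ⟨e, mem_componentOf_E he (hends ▸ Sym2.mem_mk_left b c) hvb, hends⟩

theorem componentOf_connected (Γ : Graph α β) (v : α) : (Γ.componentOf v).Connected :=
  fun _ hu₁ _ hu₂ =>
    (symm_of _ (reflTransGen_componentOf hu₁.2)).trans (reflTransGen_componentOf hu₂.2)

theorem connected_restrictEdges_of_E_subset_componentOf {G : Graph α β} {X : Set β} {v : α}
    (h : (G.restrictEdges X).E ⊆ ((G.restrictEdges X).componentOf v).E) :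
    (G.restrictEdges X).Connected :=
  fun _ ⟨_, he₁, hu₁⟩ _ ⟨_, he₂, hu₂⟩ => (symm_of _ ((h he₁).2 _ hu₁)).trans ((h he₂).2 _ hu₂)

end Graph

namespace WeakFramework

variable {G : Graph α β} {M : Matroid β}

theorem notMem_closure_deleteVertex (h : WeakFramework G M) {v : α} (hv : v ∈ G.V) {f : β}
    (hvf : v ∈ G.ends f) (hf : ¬(G.ends f).IsDiag) : f ∉ M.closure (G.deleteVertex v).E := by
  intro hcl
  rcases h.2.2 v hv hcl with hfE | hloop
  · exact hfE.2 v hvf rfl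
  · exact hf (hloop.2 ▸ Sym2.diag_isDiag v)

theorem two_le_degree_restrictEdges (h : WeakFramework G M) {C : Set β} (hC : M.IsCircuit C) :
    ∀ v ∈ (G.restrictEdges C).V, 2 ≤ (G.restrictEdges C).degree v := by
  rintro v ⟨e₀, ⟨he₀C, he₀⟩, hve₀⟩
  have hCE : C ⊆ G.E := h.1 ▸ hC.subset_ground
  set R := G.restrictEdges C
  by_contra! hlt
  have hloops : {e ∈ R.E | R.ends e = Sym2.diag v} = ∅ := by
    by_contra hne
    have := (ncard_pos (R.finE.subset (sep_subset _ _))).mpr (nonempty_iff_ne_empty.mpr hne)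
    exact absurd hlt (by unfold Graph.degree; omega)
  have hnotloop : ∀ e ∈ C, v ∈ G.ends e → ¬(G.ends e).IsDiag := fun e he hve hd =>
    (eq_empty_iff_forall_notMem.mp hloops) e
      ⟨⟨he, hCE he⟩, Sym2.eq_diag_iff_mem_and_isDiag.mpr ⟨hve, hd⟩⟩
  have hlinks : ∀ e ∈ C, v ∈ G.ends e → e = e₀ := by
    have hle : {e ∈ R.E | v ∈ R.ends e ∧ ¬(R.ends e).IsDiag}.ncard ≤ 1 := by
      unfold Graph.degree at hlt; omega
    intro e he hve
    exact (ncard_le_one (R.finE.subset (sep_subset _ _))).mp hle e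
      ⟨⟨he, hCE he⟩, hve, hnotloop e he hve⟩ e₀ ⟨⟨he₀C, he₀⟩, hve₀, hnotloop e₀ he₀C hve₀⟩
  refine h.notMem_closure_deleteVertex (G.ends_mem he₀ hve₀) hve₀ (hnotloop e₀ he₀C hve₀)
    (M.closure_subset_closure ?_ (hC.mem_closure_sdiff_singleton_of_mem he₀C))
  rintro e ⟨heC, hne⟩
  exact ⟨hCE heC, fun x hx hxv => hne (hlinks e heC (mem_singleton_iff.mp hxv ▸ hx))⟩

theorem ncard_le_ncard_of_indep (h : WeakFramework G M) {w : α} {S : Set α} (hwS : w ∈ S)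
    (hS : S ⊆ (G.componentOf w).V) {J : Set β} (hJ : M.Indep J) (hJS : J ⊆ G.edgesWithin S) :
    J.ncard ≤ S.ncard := by
  set K := G.componentOf w
  induction hn : (K.V \ S).ncard generalizing S J with
  | zero =>
    have hKS : K.V ⊆ S := sdiff_eq_empty.mp ((ncard_eq_zero K.finV.sdiff).mp hn)
    calc J.ncard ≤ rank M K.E :=
          ncard_le_rank hJ (fun e he => ⟨(hJS he).1, fun x hx => (hS ((hJS he).2 x hx)).2⟩) K.finE
      _ ≤ K.V.ncard := h.2.1 K ⟨w, (hS hwS).1, rfl⟩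
      _ ≤ S.ncard := ncard_le_ncard hKS (K.finV.subset hS)
  | succ n ih =>
    -- An edge `e` from `S` to a new vertex `x` is not spanned by `J`, whose edges avoid `x`.
    obtain ⟨z, hzK, hzS⟩ := nonempty_of_ncard_ne_zero (s := K.V \ S) (by omega)
    obtain ⟨y, hyS, x, hxS, hwx, e, he, hends⟩ := hzK.2.exists_rel_of_mem_of_notMem hwS hzS
    have hxe : x ∈ G.ends e := hends ▸ Sym2.mem_mk_right y x
    have hxK : x ∈ K.V := ⟨G.ends_mem he hxe, hwx⟩
    have heJ : e ∉ J := fun heJ => hxS ((hJS heJ).2 x hxe)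
    have hJx : J ⊆ (G.deleteVertex x).E := fun f hf =>
      ⟨(hJS hf).1, fun u hu hux => hxS (mem_singleton_iff.mp hux ▸ (hJS hf).2 u hu)⟩
    have he_nonloop : ¬(G.ends e).IsDiag := by
      rw [hends, Sym2.mk_isDiag_iff]
      exact fun hyx => hxS (hyx ▸ hyS)
    have hindep : M.Indep (insert e J) := (hJ.insert_indep_iff_of_notMem heJ).mpr
      ⟨h.1 ▸ he, fun hcl => h.notMem_closure_deleteVertex hxK.1 hxe he_nonloop
        (M.closure_subset_closure hJx hcl)⟩
    have hJS' : insert e J ⊆ G.edgesWithin (insert x S) := by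
      refine insert_subset ⟨he, fun u hu => ?_⟩
        (hJS.trans fun f hf => ⟨hf.1, fun u hu => mem_insert_of_mem x (hf.2 u hu)⟩)
      rw [hends, Sym2.mem_iff] at hu
      rcases hu with rfl | rfl
      exacts [mem_insert_of_mem x hyS, mem_insert u S]
    have hn' : (K.V \ insert x S).ncard = n := by
      have hdiff : K.V \ insert x S = (K.V \ S) \ {x} := by
        ext
        simp only [mem_sdiff, mem_insert_iff, mem_singleton_iff]
        tauto
      rw [hdiff, ncard_sdiff_singleton_of_mem (s := K.V \ S) ⟨hxK, hxS⟩, hn]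
      rfl
    have hle := ih (mem_insert_of_mem x hwS) hindep hJS' (insert_subset hxK hS) hn'
    rw [ncard_insert_of_notMem heJ (G.finE.subset fun f hf => (hJS hf).1),
      ncard_insert_of_notMem hxS (K.finV.subset hS)] at hle
    omega

theorem ncard_le_ncard_of_connected (h : WeakFramework G M) {H : Graph α β}
    (hHG : H.IsSubgraph G) (hH : H.Connected) {J : Set β} (hJ : M.Indep J) (hJH : J ⊆ H.E) :
    J.ncard ≤ H.V.ncard := by
  obtain rfl | ⟨e, he⟩ := J.eq_empty_or_nonempty
  · simp
  obtain ⟨w, hw⟩ : ∃ w, w ∈ H.ends e := ⟨_, Sym2.out_fst_mem _⟩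
  have hwH : w ∈ H.V := H.ends_mem (hJH he) hw
  exact h.ncard_le_ncard_of_indep hwH (hHG.V_subset_componentOf hH hwH) hJ
    (hJH.trans hHG.E_subset_edgesWithin)

end WeakFramework

/-- Let `G` be a weak framework for a matroid `M` and let `C` be a
circuit of `M`. Then either (a) `G[C]` is a balanced cycle, or (b) `G[C]` is a connected
graph of minimum degree at least two with `|C| = |V(G[C])| + 1` containing no balanced
cycle, or (c) `G[C]` is a vertex-disjoint union of non-balanced cycles. -/
theorem statement13 {α : Type u} {β : Type v} (G : Graph α β) (M : Matroid β)
    (h : WeakFramework G M) (C : Set β) (hC : IsCircuit M C) :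
    (G.restrictEdges C).IsCycleGraph ∨
    ((G.restrictEdges C).Connected ∧
      (∀ v ∈ (G.restrictEdges C).V, 2 ≤ (G.restrictEdges C).degree v) ∧
      C.ncard = (G.restrictEdges C).V.ncard + 1 ∧
      ∀ D, (G.restrictEdges C).CycleSet D → ¬ IsCircuit M D) ∨
    (∀ H : Graph α β, H.IsComponentOf (G.restrictEdges C) →
      H.IsCycleGraph ∧ ¬ IsCircuit M H.E) := by
  rw [isCircuit_iff] at hC
  have hCE : C ⊆ G.E := h.1 ▸ hC.subset_ground
  set R := G.restrictEdges C
  have hRE : R.E = C := inter_eq_left.mpr hCE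
  have hRG : R.IsSubgraph G := G.restrictEdges_isSubgraph C
  have hmin := h.two_le_degree_restrictEdges hC
  by_cases hconn : R.Connected
  · obtain ⟨e₀, he₀⟩ := hC.nonempty
    have hVC : R.V.ncard ≤ C.ncard := hRE ▸ R.ncard_V_le_ncard_E hmin
    have hCV : C.ncard - 1 ≤ R.V.ncard := ncard_sdiff_singleton_of_mem he₀ ▸
      h.ncard_le_ncard_of_connected hRG hconn (hC.sdiff_singleton_indep he₀) (hRE ▸ sdiff_subset)
    obtain hcard | hcard : C.ncard = R.V.ncard ∨ C.ncard = R.V.ncard + 1 := by omega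
    · exact .inl (R.isCycleGraph_of_ncard_E_le ⟨e₀, hRE ▸ he₀⟩ hconn hmin (hRE ▸ hcard.le))
    refine .inr (.inl ⟨hconn, hmin, hcard, fun D hD hDC => ?_⟩)
    obtain rfl : D = C := (isCircuit_iff.mp hDC).eq_of_subset_isCircuit hC (hRE ▸ hD.1)
    have hcyc : R.V.ncard = R.E.ncard := by
      simpa only [R, G.restrictEdges_restrictEdges_self] using hD.2.ncard_V_eq_ncard_E
    rw [hRE] at hcyc
    omega
  refine .inr (.inr fun K ⟨v, ⟨e, he, hve⟩, hK⟩ => ?_)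
  subst hK
  have hKC : (R.componentOf v).E ⊂ C := hRE ▸ ⟨(R.componentOf_isSubgraph v).2.1,
    fun hsub => hconn (Graph.connected_restrictEdges_of_E_subset_componentOf hsub)⟩
  have hKind := hC.ssubset_indep hKC
  have hKG := (R.componentOf_isSubgraph v).trans hRG
  refine ⟨Graph.isCycleGraph_of_ncard_E_le _ ⟨e, Graph.mem_componentOf_E he hve .refl⟩
    (R.componentOf_connected v) (fun u hu => Graph.degree_componentOf hu ▸ hmin u hu.1)
    (h.ncard_le_ncard_of_connected hKG (R.componentOf_connected v) hKind subset_rfl), ?_⟩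
  exact fun hcirc => hcirc.1.not_indep hKind

end QuasiGraphicPaper
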